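/- Let Q, X, Y be IPC formulas, let β = QQ(X ⊃ Y) = ((X ⊃ Y) ⊃ Q) ⊃ Q, β_0 = QX = X ⊃ Q, β_1 = QQY = (Y ⊃ Q) ⊃ Q, and let θ = (Z_N, …, Z_0) be a finite nonempty sequence of IPC formulas having β among its terms. If both β_0 ⊃ C(θ) and β_1 ⊃ C(θ) are theorems of IPC, then C(θ) = Z_N ⊃ (⋯(Z_0 ⊃ Q)⋯) is a theorem of IPC. -/
import Mathlib


/-- Formulas of the Implicational Propositional Calculus: propositional
variables and implication. -/
inductive IPCFormula : Type where
  | var : ℕ → IPCFormula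
  | imp : IPCFormula → IPCFormula → IPCFormula

infixr:60 " ⊃' " => IPCFormula.imp

/-- Derivability from a set of hypotheses Γ in the Hilbert system with
axiom schemes IPC1, IPC2, Peirce and the rule modus ponens. -/
inductive IPCDeriv : Set IPCFormula → IPCFormula → Prop where
  | hyp {Γ : Set IPCFormula} {X : IPCFormula} : X ∈ Γ → IPCDeriv Γ X
  | ipc1 {Γ : Set IPCFormula} (X Y : IPCFormula) :
      IPCDeriv Γ (X ⊃' (Y ⊃' X))
  | ipc2 {Γ : Set IPCFormula} (X Y Z : IPCFormula) :
      IPCDeriv Γ ((X ⊃' (Y ⊃' Z)) ⊃' ((X ⊃' Y) ⊃' (X ⊃' Z)))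
  | peirce {Γ : Set IPCFormula} (X Y : IPCFormula) :
      IPCDeriv Γ (((X ⊃' Y) ⊃' X) ⊃' X)
  | mp {Γ : Set IPCFormula} {X Y : IPCFormula} :
      IPCDeriv Γ (X ⊃' Y) → IPCDeriv Γ X → IPCDeriv Γ Y

/-- A theorem of IPC: derivable from no hypotheses. -/
def IPCThm (X : IPCFormula) : Prop := IPCDeriv ∅ X

/-- Disjunction defined within IPC: X ∨ Y := (X ⊃ Y) ⊃ Y. -/
def IPCFormula.disj (X Y : IPCFormula) : IPCFormula := (X ⊃' Y) ⊃' Y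

/-- For a sequence (Z_N, …, Z_0) of IPC formulas (given as Z : ℕ → IPCFormula),
C(Z_N, …, Z_0) := Z_N ⊃ (Z_{N−1} ⊃ (⋯(Z_0 ⊃ Q)⋯)). -/
def IPCC (Q : IPCFormula) (Z : ℕ → IPCFormula) : ℕ → IPCFormula
  | 0 => Z 0 ⊃' Q
  | n + 1 => Z (n + 1) ⊃' IPCC Q Z n

lemma IPCDeriv.weaken {Γ Δ : Set IPCFormula} {A : IPCFormula}
    (hd : IPCDeriv Γ A) (h : Γ ⊆ Δ) : IPCDeriv Δ A := by
  induction hd with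
  | hyp hx => exact .hyp (h hx)
  | ipc1 X Y => exact .ipc1 X Y
  | ipc2 X Y W => exact .ipc2 X Y W
  | peirce X Y => exact .peirce X Y
  | mp _ _ ih1 ih2 => exact .mp ih1 ih2

lemma IPCDeriv.id (Γ : Set IPCFormula) (A : IPCFormula) : IPCDeriv Γ (A ⊃' A) :=
  .mp (.mp (.ipc2 A (A ⊃' A) A) (.ipc1 A (A ⊃' A))) (.ipc1 A A)

lemma IPCDeriv.deduction' {Δ : Set IPCFormula} {B : IPCFormula}
    (hd : IPCDeriv Δ B) :
    ∀ {Γ : Set IPCFormula} {A : IPCFormula}, Δ ⊆ insert A Γ → IPCDeriv Γ (A ⊃' B) := by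
  induction hd with
  | hyp hx =>
    intro Γ A hsub
    rcases hsub hx with rfl | hx'
    · exact IPCDeriv.id _ _
    · exact .mp (.ipc1 _ A) (.hyp hx')
  | ipc1 X Y => intro Γ A _; exact .mp (.ipc1 _ A) (.ipc1 X Y)
  | ipc2 X Y W => intro Γ A _; exact .mp (.ipc1 _ A) (.ipc2 X Y W)
  | peirce X Y => intro Γ A _; exact .mp (.ipc1 _ A) (.peirce X Y)
  | mp _ _ ih1 ih2 =>
    intro Γ A hsub
    exact .mp (.mp (.ipc2 _ _ _) (ih1 hsub)) (ih2 hsub)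

lemma IPCDeriv.deduction {Γ : Set IPCFormula} {A B : IPCFormula}
    (hd : IPCDeriv (insert A Γ) B) : IPCDeriv Γ (A ⊃' B) :=
  hd.deduction' (le_refl _)

/-- If C(θ up to n) is derivable and each Z j is derivable, then Q is derivable. -/
lemma IPCC_peel (Q : IPCFormula) (Z : ℕ → IPCFormula) :
    ∀ n {Δ : Set IPCFormula}, IPCDeriv Δ (IPCC Q Z n) →
      (∀ j ≤ n, IPCDeriv Δ (Z j)) → IPCDeriv Δ Q := by
  intro n
  induction n with
  | zero => intro Δ h hZ; exact .mp h (hZ 0 le_rfl)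
  | succ n ih =>
    intro Δ h hZ
    exact ih (.mp h (hZ (n+1) le_rfl)) (fun j hj => hZ j (hj.trans (Nat.le_succ n)))

theorem stmt_17 (Q X Y : IPCFormula) (Z : ℕ → IPCFormula) (N : ℕ)
    (i : ℕ) (hi : i ≤ N) (hZi : Z i = (((X ⊃' Y) ⊃' Q) ⊃' Q))
    (h0 : IPCThm (((X ⊃' Q) ⊃' IPCC Q Z N)))
    (h1 : IPCThm ((((Y ⊃' Q) ⊃' Q) ⊃' IPCC Q Z N))) :
    IPCThm (IPCC Q Z N) := by
  -- T m : hypotheses Z j for m ≤ j ≤ N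
  set T : ℕ → Set IPCFormula := fun m => {W | ∃ j, m ≤ j ∧ j ≤ N ∧ W = Z j} with hT
  have hTins : ∀ m ≤ N, T m = insert (Z m) (T (m+1)) := by
    intro m hm
    ext W
    constructor
    · rintro ⟨j, hmj, hjN, rfl⟩
      rcases eq_or_lt_of_le hmj with rfl | hlt
      · exact Or.inl rfl
      · exact Or.inr ⟨j, hlt, hjN, rfl⟩
    · rintro (rfl | ⟨j, hmj, hjN, rfl⟩)
      · exact ⟨m, le_rfl, hm, rfl⟩
      · exact ⟨j, (Nat.le_succ m).trans hmj, hjN, rfl⟩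
  have hhyp : ∀ j ≤ N, IPCDeriv (T 0) (Z j) := fun j hj => .hyp ⟨j, Nat.zero_le j, hj, rfl⟩
  -- derive Q from T 0
  have hsub0 : (∅ : Set IPCFormula) ⊆ T 0 := Set.empty_subset _
  -- (X ⊃ Q) ⊃ Q in T 0
  have hA : IPCDeriv (T 0) ((X ⊃' Q) ⊃' Q) := by
    apply IPCDeriv.deduction
    apply IPCC_peel Q Z N (.mp (h0.weaken (Set.empty_subset _)) (.hyp (Set.mem_insert _ _)))
    intro j hj
    exact .hyp (Set.mem_insert_iff.mpr (Or.inr ⟨j, Nat.zero_le j, hj, rfl⟩))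
  have hB : IPCDeriv (T 0) ((((Y ⊃' Q) ⊃' Q)) ⊃' Q) := by
    apply IPCDeriv.deduction
    apply IPCC_peel Q Z N (.mp (h1.weaken (Set.empty_subset _)) (.hyp (Set.mem_insert _ _)))
    intro j hj
    exact .hyp (Set.mem_insert_iff.mpr (Or.inr ⟨j, Nat.zero_le j, hj, rfl⟩))
  have hnY : IPCDeriv (T 0) (Y ⊃' Q) := by
    apply IPCDeriv.deduction
    have hinner : IPCDeriv (insert Y (T 0)) ((Y ⊃' Q) ⊃' Q) := by
      apply IPCDeriv.deduction
      exact .mp (.hyp (Set.mem_insert _ _))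
        (.hyp (Set.mem_insert_iff.mpr (Or.inr (Set.mem_insert _ _))))
    exact .mp (hB.weaken (Set.subset_insert _ _)) hinner
  have hXYQ : IPCDeriv (T 0) ((X ⊃' Y) ⊃' Q) := by
    apply IPCDeriv.deduction
    have hXQ : IPCDeriv (insert (X ⊃' Y) (T 0)) (X ⊃' Q) := by
      apply IPCDeriv.deduction
      have hY : IPCDeriv (insert X (insert (X ⊃' Y) (T 0))) Y :=
        .mp (.hyp (Set.mem_insert_iff.mpr (Or.inr (Set.mem_insert _ _))))
          (.hyp (Set.mem_insert _ _))
      exact .mp (hnY.weaken ((Set.subset_insert _ _).trans (Set.subset_insert _ _))) hY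
    exact .mp (hA.weaken (Set.subset_insert _ _)) hXQ
  have hβ : IPCDeriv (T 0) (((X ⊃' Y) ⊃' Q) ⊃' Q) := by
    have := hhyp i hi
    rwa [hZi] at this
  have hQ : IPCDeriv (T 0) Q := .mp hβ hXYQ
  -- now close: for all n ≤ N, T (n+1) ⊢ IPCC Q Z n
  have hclose : ∀ n ≤ N, IPCDeriv (T (n+1)) (IPCC Q Z n) := by
    intro n
    induction n with
    | zero =>
      intro h0N
      apply IPCDeriv.deduction
      rw [← hTins 0 h0N]
      exact hQ
    | succ n ih =>
      intro hn1
      show IPCDeriv (T (n+2)) (Z (n+1) ⊃' IPCC Q Z n)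
      apply IPCDeriv.deduction
      rw [← hTins (n+1) hn1]
      exact ih (le_of_lt hn1)
  have hTN : T (N+1) = (∅ : Set IPCFormula) := by
    ext W
    simp only [Set.mem_setOf_eq, Set.mem_empty_iff_false, iff_false, hT]
    rintro ⟨j, hj1, hjN, _⟩
    omega
  have := hclose N le_rfl
  rwa [hTN] at this
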